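/- arXiv:0801.3556 — 4 statements merged into one kernel-verified Lean document; each statement's English description precedes it below -/
import Mathlib

section
/- There exists an absolute constant C > 0 with the following property. Let E be a real Banach space with modulus of convexity of power type 2 with constant λ ≥ 1, and suppose the dual space E* has Gaussian type 2 with constant T ≥ 1. Let m ≥ 2 and let X₁, …, X_m ∈ E* satisfy ‖X_j‖_* ≤ L for all 1 ≤ j ≤ m; for y ∈ E set ‖y‖_{∞,m} = max_{1 ≤ ℓ ≤ m} |⟨X_ℓ, y⟩|. If ε > 0 and x₁, …, x_N are points of the closed unit ball B_E with ‖x_i − x_j‖_{∞,m} ≥ ε for all i ≠ j, then ε·√(log N) ≤ C · λ² · T · L · √(log m). -/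
open MeasureTheory

/-- `E` has modulus of convexity of power type 2 with constant `lam`:
`‖(x+y)/2‖² + lam⁻²·‖(x−y)/2‖² ≤ (‖x‖² + ‖y‖²)/2`. -/
def ModulusConvexityPowerType2 (E : Type*) [NormedAddCommGroup E] [NormedSpace ℝ E]
    (lam : ℝ) : Prop :=
  ∀ x y : E, ‖(2 : ℝ)⁻¹ • (x + y)‖ ^ 2 + lam⁻¹ ^ 2 * ‖(2 : ℝ)⁻¹ • (x - y)‖ ^ 2 ≤
    (‖x‖ ^ 2 + ‖y‖ ^ 2) / 2

/-- `F` has Gaussian type 2 with constant `T`. -/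
def GaussianType2 (F : Type*) [NormedAddCommGroup F] [NormedSpace ℝ F] (T : ℝ) : Prop :=
  ∀ (N : ℕ) (x : Fin N → F),
    (∫ g : Fin N → ℝ, ‖∑ i, g i • x i‖
        ∂(Measure.pi fun _ => ProbabilityTheory.gaussianReal 0 1)) ≤
      T * Real.sqrt (∑ i, ‖x i‖ ^ 2)

/-! Power type 2 convexity of `E` dualizes, through the conjugacy of `‖x‖²/2` and `‖θ‖²/2`, to
the smoothness inequality `‖θ + v‖² + ‖θ - v‖² ≤ 2‖θ‖² + 2λ²‖v‖²` in `E*`.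

Run a perceptron in `E*` towards a target `x`: as long as some `|⟨X_ℓ, x - w θ⟩|` exceeds
`τ = ε/3`, where `w θ = ‖θ‖ u` with `‖u‖ ≤ 1` and `θ u ≈ ‖θ‖`, add `±η X_ℓ` to `θ`.
By smoothness every correction lowers the potential `‖θ‖²/2 - θ x ≥ -1/2` by about
`(τ/λL)²`, so the run stops within `d ≈ (λL/ε)²` steps. The run is determined by its record of
corrections, a word of length `d` over `2m + 1` letters, and the state where it stops
determines `x` up to `2τ < ε` in `‖·‖_{∞,m}`. Hence separated points have distinct records,
`N ≤ (2m + 1)^d`, and `log N ≲ (λL/ε)² log m`. -/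

section DualSmoothness

variable {E : Type*} [NormedAddCommGroup E] [NormedSpace ℝ E]

theorem StrongDual.exists_norm_le_one_sub_le_apply (φ : StrongDual ℝ E) {κ : ℝ}
    (hκ : 0 < κ) : ∃ u : E, ‖u‖ ≤ 1 ∧ ‖φ‖ - κ ≤ φ u := by
  obtain ⟨u, hu, hφu⟩ := φ.exists_lt_apply_of_lt_opNorm (sub_lt_self ‖φ‖ hκ)
  rcases lt_abs.mp (Real.norm_eq_abs (φ u) ▸ hφu) with h | h
  · exact ⟨u, hu.le, h.le⟩
  · exact ⟨-u, by simpa using hu.le, by simpa using h.le⟩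

theorem StrongDual.half_sq_norm_le_of_forall_apply_sub_le (φ : StrongDual ℝ E) {c : ℝ}
    (h : ∀ x, φ x - ‖x‖ ^ 2 / 2 ≤ c) : ‖φ‖ ^ 2 / 2 ≤ c := by
  refine le_of_forall_pos_le_add fun δ hδ => ?_
  obtain ⟨u, hu, hφu⟩ :=
    φ.exists_norm_le_one_sub_le_apply (κ := δ / (‖φ‖ + 1)) (by positivity)
  have hx := h (‖φ‖ • u)
  rw [map_smul, smul_eq_mul, norm_smul, norm_norm] at hx
  have hδ' : δ / (‖φ‖ + 1) * ‖φ‖ ≤ δ := by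
    rw [div_mul_eq_mul_div, div_le_iff₀ (by positivity)]; nlinarith [norm_nonneg φ]
  have hu' : (‖φ‖ * ‖u‖) ^ 2 ≤ ‖φ‖ ^ 2 :=
    pow_le_pow_left₀ (by positivity) (mul_le_of_le_one_right (norm_nonneg φ) hu) 2
  nlinarith [mul_le_mul_of_nonneg_left hφu (norm_nonneg φ)]

theorem StrongDual.abs_apply_sub_le (φ : StrongDual ℝ E) {a b : E} (ha : ‖a‖ ≤ 1)
    (hb : ‖b‖ ≤ 1) : |φ (a - b)| ≤ 2 * ‖φ‖ :=
  calc |φ (a - b)| ≤ ‖φ‖ * ‖a - b‖ := φ.le_opNorm (a - b)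
    _ ≤ ‖φ‖ * 2 := by gcongr; linarith [norm_sub_le a b]
    _ = 2 * ‖φ‖ := mul_comm _ _

namespace ModulusConvexityPowerType2

variable {lam : ℝ} (hconv : ModulusConvexityPowerType2 E lam)
include hconv

theorem apply_add_add_apply_sub_le (hlam : lam ≠ 0) (θ v : StrongDual ℝ E) (x y : E) :
    θ (x + y) + v (x - y) ≤ ‖θ‖ ^ 2 + lam ^ 2 * ‖v‖ ^ 2 + (‖x‖ ^ 2 + ‖y‖ ^ 2) / 2 := by
  have hθ : θ (x + y) ≤ ‖θ‖ * ‖x + y‖ := (le_abs_self _).trans (θ.le_opNorm _)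
  have hv : v (x - y) ≤ ‖v‖ * ‖x - y‖ := (le_abs_self _).trans (v.le_opNorm _)
  have hc := hconv x y
  simp only [norm_smul, norm_inv, Real.norm_ofNat] at hc
  have hlam' : lam * ‖v‖ * (lam⁻¹ * ‖x - y‖) = ‖v‖ * ‖x - y‖ := by field_simp
  nlinarith [sq_nonneg (‖θ‖ - ‖x + y‖ / 2), sq_nonneg (lam * ‖v‖ - lam⁻¹ * ‖x - y‖ / 2)]

theorem norm_add_sq_add_norm_sub_sq_le (hlam : lam ≠ 0) (θ v : StrongDual ℝ E) :
    ‖θ + v‖ ^ 2 + ‖θ - v‖ ^ 2 ≤ 2 * ‖θ‖ ^ 2 + 2 * lam ^ 2 * ‖v‖ ^ 2 := by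
  have hadd : ∀ y, ‖θ + v‖ ^ 2 / 2 ≤
      ‖θ‖ ^ 2 + lam ^ 2 * ‖v‖ ^ 2 + ‖y‖ ^ 2 / 2 - (θ - v) y := fun y =>
    (θ + v).half_sq_norm_le_of_forall_apply_sub_le fun x => by
      have := hconv.apply_add_add_apply_sub_le hlam θ v x y
      simp only [add_apply, sub_apply, map_add, map_sub] at this ⊢
      linarith
  have hsub := (θ - v).half_sq_norm_le_of_forall_apply_sub_le
    (c := ‖θ‖ ^ 2 + lam ^ 2 * ‖v‖ ^ 2 - ‖θ + v‖ ^ 2 / 2) fun y => by linarith [hadd y]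
  linarith

theorem norm_add_sq_le (hlam : lam ≠ 0) (θ v : StrongDual ℝ E) {u : E} (hu : ‖u‖ ≤ 1) :
    ‖θ + v‖ ^ 2 ≤
      ‖θ‖ ^ 2 + 2 * ‖θ‖ * v u + 2 * lam ^ 2 * ‖v‖ ^ 2 + 2 * (‖θ‖ - θ u) * (‖θ‖ + ‖v‖) := by
  have hpar := hconv.norm_add_sq_add_norm_sub_sq_le hlam θ v
  have hsub : ((θ - v) u) ^ 2 ≤ ‖θ - v‖ ^ 2 := by
    rw [← sq_abs, ← Real.norm_eq_abs]
    exact pow_le_pow_left₀ (norm_nonneg _) ((θ - v).unit_le_opNorm u hu) 2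
  have hθu := (abs_le.mp (Real.norm_eq_abs _ ▸ θ.unit_le_opNorm u hu)).2
  have hvu := abs_le.mp (Real.norm_eq_abs _ ▸ v.unit_le_opNorm u hu)
  rw [sub_apply] at hsub
  nlinarith [mul_le_mul_of_nonneg_left hvu.1 (sub_nonneg.mpr hθu), sq_nonneg (v u),
    sq_nonneg (‖θ‖ - θ u)]

end ModulusConvexityPowerType2

end DualSmoothness

namespace Perceptron

variable {E : Type*} [NormedAddCommGroup E] [NormedSpace ℝ E] {m : ℕ}
  (X : Fin m → StrongDual ℝ E)

noncomputable def violation (τ : ℝ) (y : E) : Option (Fin m × Bool) :=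
  if h : ∃ ℓ, τ < |X ℓ y| then some (h.choose, decide (0 < X h.choose y)) else none

def correction (η : ℝ) : Option (Fin m × Bool) → StrongDual ℝ E
  | none => 0
  | some (ℓ, b) => (if b then η else -η) • X ℓ

noncomputable def run (τ η : ℝ) (w : StrongDual ℝ E → E) (x : E) : ℕ → StrongDual ℝ E
  | 0 => 0
  | t + 1 => run τ η w x t + correction X η (violation X τ (x - w (run τ η w x t)))

variable {X}

theorem violation_eq_none_iff {τ : ℝ} {y : E} :
    violation X τ y = none ↔ ∀ ℓ, |X ℓ y| ≤ τ := by
  unfold violation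
  split_ifs with h <;> simpa using h

theorem mul_lt_correction_apply {τ η : ℝ} (hη : 0 < η) {y : E} {r : Fin m × Bool}
    (h : violation X τ y = some r) : η * τ < correction X η (some r) y := by
  unfold violation at h
  split_ifs at h with hex
  cases h
  have hτ := hex.choose_spec
  by_cases hpos : 0 < X hex.choose y
  · simp only [correction, decide_eq_true hpos, ↓reduceIte, smul_apply, smul_eq_mul]
    rw [abs_of_pos hpos] at hτ
    exact mul_lt_mul_of_pos_left hτ hη
  · simp only [correction, decide_eq_false hpos, Bool.false_eq_true, ↓reduceIte, smul_apply,
      smul_eq_mul]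
    rw [abs_of_nonpos (not_lt.mp hpos)] at hτ
    nlinarith

theorem norm_correction_le {η L : ℝ} (hη : 0 ≤ η) (hX : ∀ j, ‖X j‖ ≤ L)
    (r : Fin m × Bool) : ‖correction X η (some r)‖ ≤ η * L := by
  obtain ⟨ℓ, b⟩ := r
  have habs : ‖if b then η else -η‖ = η := by cases b <;> simp [abs_of_nonneg hη]
  rw [correction, norm_smul, habs]
  exact mul_le_mul_of_nonneg_left (hX ℓ) hη

variable {τ η : ℝ} {w : StrongDual ℝ E → E}

theorem abs_apply_sub_le_of_violation_eq_none {a b c : E} (ha : violation X τ (a - c) = none)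
    (hb : violation X τ (b - c) = none) (ℓ : Fin m) : |X ℓ (a - b)| ≤ 2 * τ := by
  have h := abs_sub (X ℓ (a - c)) (X ℓ (b - c))
  rw [← map_sub, sub_sub_sub_cancel_right] at h
  linarith [violation_eq_none_iff.mp ha ℓ, violation_eq_none_iff.mp hb ℓ]

theorem run_eq_of_violation_eq {x y : E} {t : ℕ}
    (h : ∀ s < t, violation X τ (x - w (run X τ η w x s)) =
      violation X τ (y - w (run X τ η w y s))) :
    run X τ η w x t = run X τ η w y t := by
  induction t with
  | zero => rfl
  | succ t ih =>
    rw [run, run, h t (Nat.lt_add_one t), ih fun s hs => h s (hs.trans (Nat.lt_add_one t))]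

theorem card_le_of_exists_violation_eq_none {N d : ℕ} (x : Fin N → E)
    (hsep : ∀ i j, i ≠ j → ∃ ℓ, 2 * τ < |X ℓ (x i - x j)|)
    (hstop : ∀ i, ∃ s < d, violation X τ (x i - w (run X τ η w (x i) s)) = none) :
    N ≤ (2 * m + 1) ^ d := by
  let record (i : Fin N) (s : Fin d) : Option (Fin m × Bool) :=
    violation X τ (x i - w (run X τ η w (x i) s))
  have hinj : Function.Injective record := by
    intro i j hij
    by_contra hne
    obtain ⟨s, hs, hi⟩ := hstop i
    have hrec : ∀ s' < d, violation X τ (x i - w (run X τ η w (x i) s')) =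
        violation X τ (x j - w (run X τ η w (x j) s')) := fun s' hs' => congrFun hij ⟨s', hs'⟩
    have hj : violation X τ (x j - w (run X τ η w (x j) s)) = none := hrec s hs ▸ hi
    rw [run_eq_of_violation_eq fun s' hs' => hrec s' (hs'.trans hs)] at hi
    obtain ⟨ℓ, hℓ⟩ := hsep i j hne
    exact hℓ.not_ge (abs_apply_sub_le_of_violation_eq_none hi hj ℓ)
  calc N = Fintype.card (Fin N) := (Fintype.card_fin N).symm
    _ ≤ Fintype.card (Fin d → Option (Fin m × Bool)) := Fintype.card_le_of_injective _ hinj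
    _ = (2 * m + 1) ^ d := by simp [mul_comm]

section Descent

variable {lam L : ℝ} (hconv : ModulusConvexityPowerType2 E lam) (hlam : lam ≠ 0)
  (hX : ∀ j, ‖X j‖ ≤ L) (hη : 0 < η) (hstep : 2 * lam ^ 2 * (η * L) ^ 2 ≤ η * τ)
include hconv hlam hX hη hstep

theorem potential_add_correction_le {θ : StrongDual ℝ E} {u x : E} (hu : ‖u‖ ≤ 1)
    (hslack : 4 * (‖θ‖ - θ u) * (‖θ‖ + η * L) ≤ η * τ) {r : Fin m × Bool}
    (hr : violation X τ (x - ‖θ‖ • u) = some r) :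
    ‖θ + correction X η (some r)‖ ^ 2 / 2 - (θ + correction X η (some r)) x ≤
      ‖θ‖ ^ 2 / 2 - θ x - η * τ / 4 := by
  set v := correction X η (some r)
  have hsmooth := ModulusConvexityPowerType2.norm_add_sq_le hconv hlam θ v hu
  have hviol : η * τ < v x - ‖θ‖ * v u := by
    simpa [map_sub, map_smul] using mul_lt_correction_apply hη hr
  have hθu : θ u ≤ ‖θ‖ := (le_abs_self _).trans (Real.norm_eq_abs _ ▸ θ.unit_le_opNorm u hu)
  have hv : lam ^ 2 * ‖v‖ ^ 2 ≤ lam ^ 2 * (η * L) ^ 2 := by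
    gcongr
    exact norm_correction_le hη.le hX r
  have hk : (‖θ‖ - θ u) * (‖θ‖ + ‖v‖) ≤ (‖θ‖ - θ u) * (‖θ‖ + η * L) :=
    mul_le_mul_of_nonneg_left (add_le_add_right (norm_correction_le hη.le hX r) _)
      (sub_nonneg.mpr hθu)
  rw [add_apply]
  linarith

theorem exists_violation_run_eq_none {w : StrongDual ℝ E → E}
    (hw : ∀ θ, ∃ u : E, ‖u‖ ≤ 1 ∧ w θ = ‖θ‖ • u ∧ 4 * (‖θ‖ - θ u) * (‖θ‖ + η * L) ≤ η * τ)
    {x : E} (hx : ‖x‖ ≤ 1) {d : ℕ} (hd : 2 < d * (η * τ)) :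
    ∃ s < d, violation X τ (x - w (run X τ η w x s)) = none := by
  by_contra! hactive
  have hpotential : ∀ s ≤ d,
      ‖run X τ η w x s‖ ^ 2 / 2 - run X τ η w x s x ≤ -(s * (η * τ / 4)) := by
    intro s
    induction s with
    | zero => simp [run]
    | succ s ih =>
      intro hs
      obtain ⟨r, hr⟩ := Option.ne_none_iff_exists'.mp (hactive s hs)
      obtain ⟨u, hu, hwu, hslack⟩ := hw (run X τ η w x s)
      rw [hwu] at hr
      have := potential_add_correction_le hconv hlam hX hη hstep hu hslack hr
      rw [run, hwu, hr, Nat.cast_succ]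
      linarith [ih (Nat.le_of_succ_le hs)]
  have hlower : -(1 / 2) ≤ ‖run X τ η w x d‖ ^ 2 / 2 - run X τ η w x d x := by
    have := (le_abs_self _).trans (Real.norm_eq_abs _ ▸ (run X τ η w x d).unit_le_opNorm x hx)
    nlinarith [sq_nonneg (‖run X τ η w x d‖ - 1)]
  linarith [hpotential d le_rfl]

end Descent

end Perceptron

section Packing

variable {E : Type*} [NormedAddCommGroup E] [NormedSpace ℝ E] {lam L : ℝ} {m N : ℕ}

theorem card_le_pow_of_forall_exists_lt_abs (hconv : ModulusConvexityPowerType2 E lam)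
    (hlam : lam ≠ 0) (X : Fin m → StrongDual ℝ E) (hX : ∀ j, ‖X j‖ ≤ L) (hL : 0 < L)
    {τ : ℝ} (hτ : 0 < τ) (x : Fin N → E) (hx : ∀ i, ‖x i‖ ≤ 1)
    (hsep : ∀ i j, i ≠ j → ∃ ℓ, 2 * τ < |X ℓ (x i - x j)|) {d : ℕ}
    (hd : 4 * lam ^ 2 * L ^ 2 < d * τ ^ 2) :
    N ≤ (2 * m + 1) ^ d := by
  set η := τ / (2 * lam ^ 2 * L ^ 2)
  have hη : 0 < η := by positivity
  have hητ : η * τ = τ ^ 2 / (2 * lam ^ 2 * L ^ 2) := by ring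
  have hstep : 2 * lam ^ 2 * (η * L) ^ 2 ≤ η * τ := le_of_eq <| by
    simp only [η]; field_simp
  have hκ (θ : StrongDual ℝ E) : 0 < η * τ / (4 * (‖θ‖ + η * L)) := by positivity
  choose u hu hnorming using
    fun θ : StrongDual ℝ E => θ.exists_norm_le_one_sub_le_apply (hκ θ)
  refine Perceptron.card_le_of_exists_violation_eq_none (η := η) (w := fun θ => ‖θ‖ • u θ) x
    hsep fun i => Perceptron.exists_violation_run_eq_none hconv hlam hX hη hstep
      (fun θ => ⟨u θ, hu θ, rfl, ?_⟩) (hx i) ?_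
  · have := hnorming θ
    rw [sub_le_comm, le_div_iff₀ (by positivity)] at this
    linarith
  · rw [hητ, mul_div_assoc', lt_div_iff₀ (by positivity)]
    linarith

theorem log_le_three_mul_log_of_le_pow (hm : 2 ≤ m) (hN : 0 < N) {d : ℕ}
    (h : N ≤ (2 * m + 1) ^ d) : Real.log N ≤ 3 * d * Real.log m := by
  have hm3 : (2 * m + 1 : ℝ) ≤ (m : ℝ) ^ 3 := by
    have hm2 : (2 : ℝ) ≤ m := by exact_mod_cast hm
    nlinarith [mul_le_mul_of_nonneg_right hm2 (by positivity : (0 : ℝ) ≤ m * m)]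
  calc Real.log N ≤ Real.log (((2 * m + 1) ^ d : ℕ) : ℝ) :=
        Real.log_le_log (by positivity) (by exact_mod_cast h)
    _ ≤ Real.log (((m : ℝ) ^ 3) ^ d) := by
        push_cast
        gcongr
    _ = 3 * d * Real.log m := by
        rw [Real.log_pow, Real.log_pow]; ring

theorem sq_mul_log_card_le (hconv : ModulusConvexityPowerType2 E lam) (hlam : 1 ≤ lam)
    (hm : 2 ≤ m) (X : Fin m → StrongDual ℝ E) (hX : ∀ j, ‖X j‖ ≤ L) {ε : ℝ} (hε : 0 < ε)
    (x : Fin N → E) (hx : ∀ i, ‖x i‖ ≤ 1)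
    (hsep : ∀ i j, i ≠ j → ε ≤ ⨆ ℓ, |X ℓ (x i - x j)|) :
    ε ^ 2 * Real.log N ≤ 135 * lam ^ 2 * L ^ 2 * Real.log m := by
  have hlogm : 0 ≤ Real.log m := Real.log_nonneg (by exact_mod_cast (by omega : 1 ≤ m))
  rcases lt_or_ge N 2 with hN | hN
  · have : Real.log N ≤ 0 := Real.log_nonpos N.cast_nonneg (by exact_mod_cast (by omega : N ≤ 1))
    nlinarith [mul_nonneg (mul_nonneg (sq_nonneg lam) (sq_nonneg L)) hlogm]
  have : Nonempty (Fin m) := ⟨⟨0, by omega⟩⟩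
  have hsep' (i j : Fin N) (hij : i ≠ j) : ∃ ℓ, 2 * (ε / 3) < |X ℓ (x i - x j)| :=
    exists_lt_of_lt_ciSup (by linarith [hsep i j hij])
  have hεL : ε < 3 * L := by
    obtain ⟨ℓ, hℓ⟩ := hsep' ⟨0, by omega⟩ ⟨1, by omega⟩ (by simp [Fin.ext_iff])
    linarith [(X ℓ).abs_apply_sub_le (hx ⟨0, by omega⟩) (hx ⟨1, by omega⟩), hX ℓ]
  set d := ⌊36 * lam ^ 2 * L ^ 2 / ε ^ 2⌋₊ + 1
  have hcard : N ≤ (2 * m + 1) ^ d := by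
    refine card_le_pow_of_forall_exists_lt_abs hconv (by positivity) X hX (by linarith)
      (by positivity) x hx hsep' ?_
    have := Nat.lt_floor_add_one (36 * lam ^ 2 * L ^ 2 / ε ^ 2)
    rw [div_lt_iff₀ (by positivity)] at this
    push_cast [d]
    linarith
  have hlogN := log_le_three_mul_log_of_le_pow hm (by omega) hcard
  have hdε : d * ε ^ 2 ≤ 45 * lam ^ 2 * L ^ 2 := by
    have := Nat.floor_le (by positivity : 0 ≤ 36 * lam ^ 2 * L ^ 2 / ε ^ 2)
    rw [le_div_iff₀ (by positivity)] at this
    have hε2 : ε ^ 2 ≤ 9 * (lam ^ 2 * L ^ 2) := by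
      nlinarith [mul_le_mul_of_nonneg_right (one_le_pow₀ hlam : 1 ≤ lam ^ 2) (sq_nonneg L)]
    push_cast [d]
    linarith
  calc ε ^ 2 * Real.log N ≤ ε ^ 2 * (3 * d * Real.log m) := by gcongr
    _ = 3 * (d * ε ^ 2) * Real.log m := by ring
    _ ≤ 3 * (45 * lam ^ 2 * L ^ 2) * Real.log m := by gcongr
    _ = 135 * lam ^ 2 * L ^ 2 * Real.log m := by ring

end Packing

/-- packing estimate in the norm `‖y‖_{∞,m} = max_ℓ |⟨X_ℓ, y⟩|` for points of the
unit ball of a Banach space with modulus of convexity of power type 2. -/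
theorem stmt2 :
    ∃ C : ℝ, 0 < C ∧
      ∀ (E : Type*) [NormedAddCommGroup E] [NormedSpace ℝ E] [CompleteSpace E]
        (lam T : ℝ), 1 ≤ lam → 1 ≤ T →
        ModulusConvexityPowerType2 E lam → GaussianType2 (StrongDual ℝ E) T →
        ∀ (m : ℕ), 2 ≤ m → ∀ (X : Fin m → StrongDual ℝ E) (L : ℝ),
          (∀ j, ‖X j‖ ≤ L) →
          ∀ (ε : ℝ), 0 < ε →
          ∀ (N : ℕ) (x : Fin N → E),
            (∀ i, x i ∈ Metric.closedBall (0 : E) 1) →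
            (∀ i j, i ≠ j → ε ≤ ⨆ ℓ, |X ℓ (x i - x j)|) →
            ε * Real.sqrt (Real.log N) ≤ C * lam ^ 2 * T * L * Real.sqrt (Real.log m) := by
  refine ⟨12, by norm_num, ?_⟩
  intro E _ _ _ lam T hlam hT hconv _ m hm X L hX ε hε N x hball hsep
  have hx (i : Fin N) : ‖x i‖ ≤ 1 := mem_closedBall_zero_iff.mp (hball i)
  have hestimate := sq_mul_log_card_le hconv hlam hm X hX hε x hx hsep
  have hL : 0 ≤ L := (norm_nonneg _).trans (hX ⟨0, by omega⟩)
  have hlogm : 0 ≤ Real.log m := Real.log_nonneg (by exact_mod_cast (by omega : 1 ≤ m))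
  have hlamT : lam ^ 2 ≤ (lam ^ 2 * T) ^ 2 := by
    gcongr
    nlinarith
  calc ε * Real.sqrt (Real.log N) = Real.sqrt (ε ^ 2 * Real.log N) := by
        rw [Real.sqrt_mul (sq_nonneg ε), Real.sqrt_sq hε.le]
    _ ≤ Real.sqrt ((12 * lam ^ 2 * T * L) ^ 2 * Real.log m) := by
        refine Real.sqrt_le_sqrt (hestimate.trans ?_)
        nlinarith [mul_le_mul_of_nonneg_right hlamT (mul_nonneg (sq_nonneg L) hlogm)]
    _ = 12 * lam ^ 2 * T * L * Real.sqrt (Real.log m) := by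
        rw [Real.sqrt_mul (sq_nonneg _), Real.sqrt_sq (by positivity)]
end

section
/- Let E be a real Banach space, X₁, …, X_m ∈ E*, and suppose M := sup_{y ∈ B_E} ∑_{j=1}^m ⟨X_j, y⟩² is finite. Then for all u, z, z̄ ∈ E, d(z, z̄)² ≤ 8·( |z − z̄|_{𝓔_u}² + M·‖z − z̄‖_{∞,m}²·( ‖z − u‖² + ‖z̄ − u‖² ) ), where d(z, z̄)² = ∑_{j=1}^m ⟨X_j, z − z̄⟩²·(⟨X_j, z⟩² + ⟨X_j, z̄⟩²), |x|_{𝓔_u}² = ∑_{j=1}^m ⟨X_j, x⟩²·⟨X_j, u⟩², and ‖x‖_{∞,m} = max_{1 ≤ j ≤ m} |⟨X_j, x⟩|. -/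
/-!
Write `a, b, c` for `⟨X_j, z⟩, ⟨X_j, w⟩, ⟨X_j, u⟩`. Termwise, `a² ≤ 2c² + 2(a - c)²` and likewise for `b`,
so `d(z, w)²` is at most `4 |z - w|²_{𝓔_u}` plus `2 ‖z - w‖²_{∞,m}` times
`∑ ⟨X_j, z - u⟩² + ∑ ⟨X_j, w - u⟩²`. By homogeneity, `∑ ⟨X_j, x⟩² ≤ M ‖x‖²` for every `x`.
-/

open Finset

lemma sum_sq_apply_le_mul_norm_sq {E ι : Type*} [NormedAddCommGroup E] [NormedSpace ℝ E]
    [Fintype ι] (X : ι → StrongDual ℝ E) {M : ℝ}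
    (hM : ∀ y : E, ‖y‖ ≤ 1 → ∑ j, (X j y) ^ 2 ≤ M) (x : E) :
    ∑ j, (X j x) ^ 2 ≤ M * ‖x‖ ^ 2 := by
  rcases eq_or_ne x 0 with rfl | hx
  · simp
  have hx' : ‖x‖ ≠ 0 := norm_ne_zero_iff.mpr hx
  set y := ‖x‖⁻¹ • x
  have hy : ‖y‖ ≤ 1 := by simp [y, norm_smul, hx']
  have hxy : ∑ j, (X j x) ^ 2 = ‖x‖ ^ 2 * ∑ j, (X j y) ^ 2 := by
    simp only [y, map_smul, smul_eq_mul, mul_pow, mul_sum]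
    field_simp
  rw [hxy, mul_comm M]
  exact mul_le_mul_of_nonneg_left (hM y hy) (by positivity)

lemma sq_le_sq_iSup_abs {ι : Type*} [Finite ι] (f : ι → ℝ) (i : ι) :
    f i ^ 2 ≤ (⨆ j, |f j|) ^ 2 := by
  rw [← sq_abs]
  exact pow_le_pow_left₀ (abs_nonneg (f i))
    (le_ciSup (Set.finite_range fun j => |f j|).bddAbove i) 2

lemma sq_sub_mul_sq_add_sq_le {a b c s : ℝ} (hs : (a - b) ^ 2 ≤ s) :
    (a - b) ^ 2 * (a ^ 2 + b ^ 2) ≤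
      4 * ((a - b) ^ 2 * c ^ 2) + 2 * s * ((a - c) ^ 2 + (b - c) ^ 2) := by
  have ha : a ^ 2 ≤ 2 * c ^ 2 + 2 * (a - c) ^ 2 := by nlinarith [sq_nonneg (a - 2 * c)]
  have hb : b ^ 2 ≤ 2 * c ^ 2 + 2 * (b - c) ^ 2 := by nlinarith [sq_nonneg (b - 2 * c)]
  have hab := sq_nonneg (a - b)
  nlinarith [mul_le_mul_of_nonneg_left (add_le_add ha hb) hab,
    mul_le_mul_of_nonneg_right hs (add_nonneg (sq_nonneg (a - c)) (sq_nonneg (b - c)))]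

/-- `d(z, w)² ≤ 8 (|z − w|_{𝓔_u}² + M ‖z − w‖_{∞,m}² (‖z−u‖² + ‖w−u‖²))`,
where `d(z,w)² = ∑ ⟨X_j, z−w⟩² (⟨X_j,z⟩² + ⟨X_j,w⟩²)`,
`|x|_{𝓔_u}² = ∑ ⟨X_j,x⟩² ⟨X_j,u⟩²`, `‖x‖_{∞,m} = max_j |⟨X_j,x⟩|` and
`M = sup_{y ∈ B_E} ∑ ⟨X_j, y⟩²`. -/
theorem stmt6 (E : Type*) [NormedAddCommGroup E] [NormedSpace ℝ E]
    (m : ℕ) (X : Fin m → StrongDual ℝ E) (M : ℝ)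
    (hM : IsLUB {r : ℝ | ∃ y ∈ Metric.closedBall (0 : E) 1, r = ∑ j, (X j y) ^ 2} M)
    (u z w : E) :
    (∑ j, (X j (z - w)) ^ 2 * ((X j z) ^ 2 + (X j w) ^ 2)) ≤
      8 * ((∑ j, (X j (z - w)) ^ 2 * (X j u) ^ 2) +
        M * (⨆ j, |X j (z - w)|) ^ 2 * (‖z - u‖ ^ 2 + ‖w - u‖ ^ 2)) := by
  have hball : ∀ y : E, ‖y‖ ≤ 1 → ∑ j, (X j y) ^ 2 ≤ M :=
    fun y hy => hM.1 ⟨y, by simpa using hy, rfl⟩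
  set S := ⨆ j, |X j (z - w)|
  set A := ∑ j, (X j (z - w)) ^ 2 * (X j u) ^ 2
  have htermwise : ∑ j, (X j (z - w)) ^ 2 * ((X j z) ^ 2 + (X j w) ^ 2) ≤
      4 * A + 2 * S ^ 2 * (∑ j, (X j (z - u)) ^ 2 + ∑ j, (X j (w - u)) ^ 2) := by
    simp only [A, mul_sum, ← sum_add_distrib, map_sub]
    exact sum_le_sum fun j _ => sq_sub_mul_sq_add_sq_le (c := X j u)
      (by rw [← map_sub]; exact sq_le_sq_iSup_abs (fun j => X j (z - w)) j)
  have hzu := sum_sq_apply_le_mul_norm_sq X hball (z - u)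
  have hwu := sum_sq_apply_le_mul_norm_sq X hball (w - u)
  have hA : 0 ≤ A := sum_nonneg fun j _ => by positivity
  have hM0 : 0 ≤ M := by simpa using hball 0 (by simp)
  have hS : 0 ≤ S ^ 2 := sq_nonneg S
  nlinarith [mul_le_mul_of_nonneg_left (add_le_add hzu hwu) (mul_nonneg zero_le_two hS),
    mul_nonneg (mul_nonneg hM0 hS) (add_nonneg (sq_nonneg ‖z - u‖) (sq_nonneg ‖w - u‖))]
end

section
/- Let E be a real Banach space and X₁, …, X_m ∈ E*. For every x ∈ E and every ρ > 0, the ball 𝓑_ρ(x) = { y ∈ E : d(x, y) ≤ ρ } with respect to the quasi-metric d is a convex subset of E, where d(x, y)² = ∑_{j=1}^m ⟨X_j, x − y⟩² · ( ⟨X_j, x⟩² + ⟨X_j, y⟩² ). -/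
/-!
For fixed `x`, each summand of `d(x, y)²` is `u ↦ (a - u)² (a² + u²)` with `a = ⟨X_j, x⟩`,
evaluated at the linear functional `u = ⟨X_j, y⟩`. That quartic in `u` is convex, so
`y ↦ d(x, y)²` is convex. Since `√` is monotone, `y ↦ d(x, y)` is quasiconvex and its sublevel
sets, the balls, are convex.
-/

open Set

theorem convexOn_sum {𝕜 E β ι : Type*} [Semiring 𝕜] [PartialOrder 𝕜] [AddCommMonoid E]
    [AddCommMonoid β] [PartialOrder β] [IsOrderedAddMonoid β] [SMul 𝕜 E] [Module 𝕜 β]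
    {s : Set E} (hs : Convex 𝕜 s) (t : Finset ι) {f : ι → E → β}
    (hf : ∀ i ∈ t, ConvexOn 𝕜 s (f i)) : ConvexOn 𝕜 s fun x => ∑ i ∈ t, f i x := by
  classical
  induction t using Finset.induction_on with
  | empty => simpa using convexOn_const (0 : β) hs
  | insert i t hi ih =>
    simp only [Finset.sum_insert hi]
    exact (hf i (t.mem_insert_self i)).add (ih fun j hj => hf j (Finset.mem_insert_of_mem hj))

/-- `(a - u)² (a² + u²) = (u - a/2)⁴ + a²u²/2 - 3a³u/2 + 15a⁴/16`: a convex quartic, a convex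
quadratic and an affine function. -/
theorem convexOn_sub_sq_mul_sq_add_sq (a : ℝ) :
    ConvexOn ℝ univ fun u : ℝ => (a - u) ^ 2 * (a ^ 2 + u ^ 2) := by
  have hquartic : ConvexOn ℝ univ fun u : ℝ => (u - a / 2) ^ 4 := by
    simpa [sub_eq_neg_add, Function.comp_def] using
      (Even.convexOn_pow (𝕜 := ℝ) (by decide : Even 4)).translate_right (-(a / 2))
  have hquadratic : ConvexOn ℝ univ fun u : ℝ => a ^ 2 / 2 * u ^ 2 :=
    (Even.convexOn_pow even_two).smul (by positivity)
  have haffine : ConvexOn ℝ univ fun u : ℝ => -(3 / 2 * a ^ 3) * u + 15 / 16 * a ^ 4 :=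
    ((LinearMap.mulLeft ℝ (-(3 / 2 * a ^ 3))).convexOn convex_univ).add_const _
  refine ((hquartic.add hquadratic).add haffine).congr fun u _ => ?_
  simp only [Pi.add_apply]
  ring

section QuasiDist

variable {E ι : Type*} [AddCommGroup E] [Module ℝ E] [Fintype ι]

def quasiDistSq (X : ι → E →ₗ[ℝ] ℝ) (x y : E) : ℝ :=
  ∑ j, (X j (x - y)) ^ 2 * ((X j x) ^ 2 + (X j y) ^ 2)

theorem convexOn_quasiDistSq (X : ι → E →ₗ[ℝ] ℝ) (x : E) :
    ConvexOn ℝ univ (quasiDistSq X x) := by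
  have h := convexOn_sum convex_univ Finset.univ fun j _ =>
    (convexOn_sub_sq_mul_sq_add_sq (X j x)).comp_linearMap (X j)
  refine h.congr fun y _ => ?_
  simp only [Function.comp_apply, quasiDistSq, map_sub]

end QuasiDist

theorem stmt7_general (E : Type*) [NormedAddCommGroup E] [NormedSpace ℝ E]
    (m : ℕ) (X : Fin m → StrongDual ℝ E) (x : E) (ρ : ℝ) :
    Convex ℝ {y : E |
      Real.sqrt (∑ j, (X j (x - y)) ^ 2 * ((X j x) ^ 2 + (X j y) ^ 2)) ≤ ρ} := by
  have h := (convexOn_quasiDistSq (fun j => (X j : E →ₗ[ℝ] ℝ)) x).quasiconvexOn.monotone_comp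
    Real.sqrt_monotone ρ
  simpa only [Set.sep_univ, Function.comp_apply, quasiDistSq, ContinuousLinearMap.coe_coe] using h

/-- the ball `𝓑_ρ(x) = {y : d(x,y) ≤ ρ}` for the quasi-metric
`d(x,y)² = ∑ ⟨X_j, x−y⟩² (⟨X_j,x⟩² + ⟨X_j,y⟩²)` is convex. -/
theorem stmt7 (E : Type*) [NormedAddCommGroup E] [NormedSpace ℝ E]
    (m : ℕ) (X : Fin m → StrongDual ℝ E) (x : E) (ρ : ℝ) (hρ : 0 < ρ) :
    Convex ℝ {y : E |
      Real.sqrt (∑ j, (X j (x - y)) ^ 2 * ((X j x) ^ 2 + (X j y) ^ 2)) ≤ ρ} :=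
  stmt7_general E m X x ρ
end

section
/- Let N ≥ 1 and let G be the additive group (ZMod 2)^N, so |G| = 2^N. For every real c ∈ (0, 1) with log(1/c) ≥ 2^{−N/2} and every subset Λ ⊆ G with |Λ| ≥ c·2^N, there exist an element b ∈ G and a subgroup Γ of G such that |Γ| ≥ (N·log 2) / (3·log(1/c)) and b + Γ ⊆ Λ. -/
/-!
Let `c = exp (-L)`. Starting from `A = Λ` and `Γ = 0`, repeatedly replace `A` by
`{a ∈ A | a + x ∈ A}` and `Γ` by `Γ ⊔ ⟨x⟩`, where `x ∉ Γ` maximises the size of the new `A`.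
Since the group has exponent two, `A + Γ ⊆ Λ` is preserved and `|Γ|` doubles, and averaging
`∑ₓ #{a ∈ A | a + x ∈ A} = |A|²` over the complement of `Γ` gives
`|A'| (|G| - |Γ|) ≥ |A| (|A| - |Γ|)`. After `i` steps the density of `A` is at least
`c^(2^i) - (5/4) β (c^(2^(i-1)) - c^(2^i))` with `β = 2^i/|G|`. With `a = 2^i L`, the hypotheses
`L ≥ |G|^(-1/2)` and `3a ≤ N log 2` give `β ≤ a e^(-3a/2)`, and `a e^(-a/2) ≤ 2/e < 16/21` keeps
`A` larger than `Γ`, so one more step is always possible: it yields a coset of a subgroup of size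
`2^(k+1) > N log 2 / (3L)` inside `Λ`.
-/

open Finset Real Pointwise

/-- If `A + Γ ⊆ Λ` with `|Γ| = 2^i`, the iteration keeps the density of `A` above
`densityBound r β` for `r = c^(2^(i-1))` and `β = 2^i / |G|`. -/
noncomputable def densityBound (r β : ℝ) : ℝ := r ^ 2 - 5 / 4 * β * (r - r ^ 2)

theorem densityBound_le_sq {r β : ℝ} (hr0 : 0 ≤ r) (hr1 : r ≤ 1) (hβ : 0 ≤ β) :
    densityBound r β ≤ r ^ 2 := by
  unfold densityBound
  nlinarith [mul_nonneg hβ (mul_nonneg hr0 (sub_nonneg.2 hr1))]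

theorem densityBound_sq_two_mul_le {r β D D' : ℝ} (hr0 : 0 ≤ r) (hr1 : r ≤ 1) (hβ0 : 0 ≤ β)
    (hβ : β ≤ 2 / 15) (hM : β ≤ densityBound r β) (hD : densityBound r β ≤ D)
    (hD' : D * (D - β) ≤ (1 - β) * D') : densityBound (r ^ 2) (2 * β) ≤ D' := by
  set M := densityBound r β with hMdef
  have hmono : M * (M - β) ≤ D * (D - β) := by nlinarith
  have hpoly : (1 - β) * densityBound (r ^ 2) (2 * β) ≤ M * (M - β) := by
    -- At `r = 1` the second factor is `1/2 - 15/4 β`: this is where `5/4` and `2/15` come from.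
    have key : M * (M - β) - (1 - β) * densityBound (r ^ 2) (2 * β) =
        β * r * (1 - r) * (r * (3 / 2 - r) +
          5 / 4 * β * (5 / 4 * r * (1 - r) + 1 - 2 * r - 2 * r ^ 2)) := by
      simp only [hMdef, densityBound]; ring
    have : 0 ≤ r * (3 / 2 - r) + 5 / 4 * β * (5 / 4 * r * (1 - r) + 1 - 2 * r - 2 * r ^ 2) := by
      nlinarith [mul_nonneg hβ0 hr0, mul_nonneg (mul_nonneg hβ0 hr0) hr0,
        mul_nonneg hr0 (sub_nonneg.2 hr1)]
    nlinarith [mul_nonneg (mul_nonneg (mul_nonneg hβ0 hr0) (sub_nonneg.2 hr1)) this]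
  have h1β : 0 < 1 - β := by linarith
  nlinarith

theorem mul_exp_neg_mul_le (x : ℝ) {k : ℝ} (hk : 0 < k) :
    x * exp (-(k * x)) ≤ 1 / (k * exp 1) := by
  rcases le_or_gt x 0 with hx | hx
  · exact (mul_nonpos_of_nonpos_of_nonneg hx (exp_pos _).le).trans (by positivity)
  · rw [exp_neg, ← div_eq_mul_inv, div_le_div_iff₀ (exp_pos _) (by positivity)]
    nlinarith [exp_one_mul_le_exp (x := k * x)]

theorem lt_densityBound_exp_neg {s β : ℝ} (hs : 0 ≤ s) (hβ0 : 0 ≤ β)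
    (hβ : β ≤ 2 * s * exp (-(3 * s))) : β < densityBound (exp (-s)) β := by
  set r := exp (-s) with hr
  have hr0 : 0 < r := exp_pos _
  have hr1 : r ≤ 1 := exp_le_one_iff.2 (by linarith)
  have hr3 : exp (-(3 * s)) = r ^ 3 := by rw [hr, ← exp_nat_mul]; ring_nf
  have hsr : s * r ≤ 1 / exp 1 := by simpa using mul_exp_neg_mul_le s one_pos
  have he : 21 / 8 < exp 1 := by linarith [exp_one_gt_d9]
  have hsr' : 21 / 8 * (s * r) < 1 := by
    rw [le_div_iff₀ (exp_pos 1)] at hsr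
    nlinarith [mul_nonneg hs hr0.le]
  -- `β (1 + 5/4 (r - r²)) ≤ 2 s r³ · 21/16 < r²`, because `r - r² ≤ 1/4` and `s r ≤ 1/e`.
  unfold densityBound
  rw [hr3] at hβ
  nlinarith [mul_nonneg hβ0 (sq_nonneg (r - 1 / 2)), mul_pos hr0 hr0,
    mul_le_mul_of_nonneg_left hβ (sq_nonneg (1 - r))]

theorem le_two_div_fifteen_of_le_mul_exp_neg {s β : ℝ} (hβ : β ≤ 2 * s * exp (-(6 * s))) :
    β ≤ 2 / 15 := by
  have he : 5 / 2 < exp 1 := by linarith [exp_one_gt_d9]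
  calc β ≤ 2 * (s * exp (-(6 * s))) := by linarith
    _ ≤ 2 * (1 / (6 * exp 1)) := by gcongr; exact mul_exp_neg_mul_le s (by norm_num)
    _ ≤ 2 / 15 := by
      rw [mul_one_div, div_le_div_iff₀ (by positivity) (by norm_num)]; linarith

theorem two_pow_div_lt_densityBound {n s : ℝ} (hn : 0 < n) (hs : 0 ≤ s) (i : ℕ)
    (hi : 1 ≤ 2 * n * s * exp (-(3 * 2 ^ i * s))) :
    2 ^ i / n < densityBound (exp (-(2 ^ i * s))) (2 ^ i / n) := by
  refine lt_densityBound_exp_neg (by positivity) (by positivity) ?_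
  rw [div_le_iff₀ hn, show 3 * (2 ^ i * s) = 3 * 2 ^ i * s by ring]
  nlinarith [mul_le_mul_of_nonneg_left hi (pow_pos (two_pos (α := ℝ)) i).le]

section

variable {G : Type*} [AddCommGroup G]

theorem AddSubgroup.mem_sup_zmultiples_iff_of_add_self (h2 : ∀ y : G, y + y = 0)
    {Γ : AddSubgroup G} {x y : G} :
    y ∈ Γ ⊔ AddSubgroup.zmultiples x ↔ y ∈ Γ ∨ x + y ∈ Γ := by
  have hzx : ∀ z ∈ AddSubgroup.zmultiples x, z = 0 ∨ z = x := by
    rintro z ⟨k, rfl⟩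
    rcases Int.even_or_odd' k with ⟨m, rfl | rfl⟩
    · left; simp [mul_comm, mul_zsmul, two_zsmul, h2]
    · right; simp [add_zsmul, mul_comm, mul_zsmul, two_zsmul, h2]
  rw [AddSubgroup.mem_sup]
  constructor
  · rintro ⟨g, hg, z, hz, rfl⟩
    rcases hzx z hz with rfl | rfl
    · simpa using Or.inl hg
    · right
      rwa [add_comm g, ← add_assoc, h2, zero_add]
  · rintro (hy | hy)
    · exact ⟨y, hy, 0, zero_mem _, add_zero y⟩
    · refine ⟨x + y, hy, x, AddSubgroup.mem_zmultiples x, ?_⟩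
      rw [add_comm x y, add_assoc, h2, add_zero]

theorem AddSubgroup.card_sup_zmultiples_of_add_self [Finite G] (h2 : ∀ y : G, y + y = 0)
    {Γ : AddSubgroup G} {x : G} (hx : x ∉ Γ) :
    Nat.card ↥(Γ ⊔ AddSubgroup.zmultiples x) = 2 * Nat.card Γ := by
  have hset : ((Γ ⊔ AddSubgroup.zmultiples x : AddSubgroup G) : Set G) =
      (Γ : Set G) ∪ (x +ᵥ (Γ : Set G)) := by
    ext y
    rw [SetLike.mem_coe, mem_sup_zmultiples_iff_of_add_self h2, Set.mem_union,
      Set.mem_vadd_set_iff_neg_vadd_mem, neg_eq_of_add_eq_zero_left (h2 x)]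
    rfl
  have hdisj : Disjoint (Γ : Set G) (x +ᵥ (Γ : Set G)) := by
    rw [Set.disjoint_left]
    intro y hy hxy
    rw [Set.mem_vadd_set_iff_neg_vadd_mem, neg_eq_of_add_eq_zero_left (h2 x)] at hxy
    exact hx (by simpa using Γ.add_mem hxy (Γ.neg_mem hy))
  change Nat.card ((Γ ⊔ AddSubgroup.zmultiples x : AddSubgroup G) : Set G) =
    2 * Nat.card (Γ : Set G)
  rw [Nat.card_coe_set_eq, Nat.card_coe_set_eq, hset, Set.ncard_union_eq hdisj,
    Set.ncard_vadd_set, two_mul]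

variable [Fintype G] [DecidableEq G]

theorem Finset.sum_card_filter_add_mem (A : Finset G) :
    ∑ x, #{a ∈ A | a + x ∈ A} = #A * #A := by
  simp_rw [card_filter]
  rw [sum_comm]
  have h : ∀ a : G, ∑ x, (if a + x ∈ A then 1 else 0) = #A := fun a =>
    (Equiv.sum_comp (Equiv.addLeft a) fun y => if y ∈ A then 1 else 0).trans (by simp)
  simp [h]

theorem Finset.exists_notMem_card_mul_card_le (A V : Finset G) (h : #V < #A) :
    ∃ x ∉ V, #A * #A + #V * #{a ∈ A | a + x ∈ A} ≤
      Fintype.card G * #{a ∈ A | a + x ∈ A} + #V * #A := by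
  set f : G → ℕ := fun x => #{a ∈ A | a + x ∈ A}
  have hcompl : #Vᶜ + #V = Fintype.card G := card_compl_add_card V
  have hne : Vᶜ.Nonempty := by
    rw [← card_pos]
    have := card_le_univ A
    omega
  obtain ⟨x, hx, hmax⟩ := exists_max_image Vᶜ f hne
  refine ⟨x, mem_compl.mp hx, ?_⟩
  have hsum : ∑ y ∈ Vᶜ, f y + ∑ y ∈ V, f y = #A * #A := by
    rw [sum_compl_add_sum, sum_card_filter_add_mem]
  have hV : ∑ y ∈ V, f y ≤ #V * #A :=
    sum_le_card_nsmul V f #A fun y _ => card_filter_le _ _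
  have hVc : ∑ y ∈ Vᶜ, f y ≤ #Vᶜ * f x := sum_le_card_nsmul Vᶜ f (f x) hmax
  nlinarith

theorem exists_sup_zmultiples_add_mem (h2 : ∀ y : G, y + y = 0) {Λ A : Finset G}
    {Γ : AddSubgroup G} (hA : ∀ a ∈ A, ∀ γ ∈ Γ, a + γ ∈ Λ) (hlt : Nat.card Γ < #A) :
    ∃ (Γ' : AddSubgroup G) (A' : Finset G), Nat.card Γ' = 2 * Nat.card Γ ∧
      (∀ a ∈ A', ∀ γ ∈ Γ', a + γ ∈ Λ) ∧
      #A * #A + Nat.card Γ * #A' ≤ Fintype.card G * #A' + Nat.card Γ * #A := by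
  classical
  have hV : #(Γ : Set G).toFinset = Nat.card Γ := (Nat.card_eq_card_toFinset _).symm
  obtain ⟨x, hxV, hx⟩ := exists_notMem_card_mul_card_le A (Γ : Set G).toFinset (hV ▸ hlt)
  rw [hV] at hx
  refine ⟨Γ ⊔ AddSubgroup.zmultiples x, {a ∈ A | a + x ∈ A},
    AddSubgroup.card_sup_zmultiples_of_add_self h2 (by simpa using hxV), ?_, hx⟩
  intro a ha γ hγ
  rw [mem_filter] at ha
  rcases (AddSubgroup.mem_sup_zmultiples_iff_of_add_self h2).1 hγ with hγ | hγ
  · exact hA a ha.1 γ hγ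
  · simpa [add_assoc, ← add_assoc x x, h2] using hA (a + x) ha.2 (x + γ) hγ

theorem exists_add_mem_iterate_of_density (h2 : ∀ y : G, y + y = 0) (Λ : Finset G) {s : ℝ}
    (hs : 0 ≤ s) (hΛ : exp (-(2 * s)) * Fintype.card G ≤ #Λ) (i : ℕ)
    (hi : 1 ≤ 2 * Fintype.card G * s * exp (-(3 * 2 ^ i * s))) :
    ∃ (Γ : AddSubgroup G) (A : Finset G), Nat.card Γ = 2 ^ i ∧
      (∀ a ∈ A, ∀ γ ∈ Γ, a + γ ∈ Λ) ∧
      densityBound (exp (-(2 ^ i * s))) (2 ^ i / Fintype.card G) ≤ #A / Fintype.card G := by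
  set n : ℝ := (Fintype.card G : ℝ)
  have hn : 0 < n := by simp [n, Fintype.card_pos]
  induction i with
  | zero =>
    refine ⟨⊥, Λ, AddSubgroup.card_bot, fun a ha γ hγ => by simpa [AddSubgroup.mem_bot.1 hγ], ?_⟩
    rw [le_div_iff₀ hn]
    refine le_trans ?_ hΛ
    gcongr
    refine (densityBound_le_sq (exp_pos _).le (exp_le_one_iff.2 (by simpa using hs))
      (by positivity)).trans ?_
    rw [← exp_nat_mul]; ring_nf; rfl
  | succ i ih =>
    have hmono : exp (-(3 * 2 ^ (i + 1) * s)) ≤ exp (-(3 * 2 ^ i * s)) :=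
      exp_le_exp.2 (by rw [pow_succ]; nlinarith [pow_pos (two_pos (α := ℝ)) i])
    have hi' : 1 ≤ 2 * n * s * exp (-(3 * 2 ^ i * s)) :=
      hi.trans (mul_le_mul_of_nonneg_left hmono (by positivity))
    obtain ⟨Γ, A, hΓ, hA, hAdens⟩ := ih hi'
    set r := exp (-(2 ^ i * s))
    set β := 2 ^ i / n
    have hβ0 : 0 ≤ β := by positivity
    have hβM : β < densityBound r β := two_pow_div_lt_densityBound hn hs i hi'
    have hlt : Nat.card Γ < #A := by
      have := hβM.trans_le hAdens
      rw [div_lt_div_iff_of_pos_right hn] at this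
      rw [hΓ]; exact_mod_cast this
    obtain ⟨Γ', A', hΓ', hA', hcount⟩ := exists_sup_zmultiples_add_mem h2 hA hlt
    refine ⟨Γ', A', by rw [hΓ', hΓ, pow_succ'], hA', ?_⟩
    have hcount' : (#A / n) * (#A / n - β) ≤ (1 - β) * (#A' / n) := by
      rw [hΓ] at hcount
      have h := (Nat.cast_le (α := ℝ)).2 hcount
      push_cast at h
      simp only [β]
      field_simp
      nlinarith
    have hr2 : r ^ 2 = exp (-(2 ^ (i + 1) * s)) := by rw [← exp_nat_mul]; ring_nf
    have h2β : 2 * β = 2 ^ (i + 1) / n := by simp only [β]; ring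
    rw [← hr2, ← h2β]
    refine densityBound_sq_two_mul_le (exp_pos _).le (exp_le_one_iff.2 (by simp; positivity)) hβ0
      ?_ hβM.le hAdens hcount'
    refine le_two_div_fifteen_of_le_mul_exp_neg (s := 2 ^ i * s) ?_
    rw [div_le_iff₀ hn]
    have : exp (-(3 * 2 ^ (i + 1) * s)) = exp (-(6 * (2 ^ i * s))) := by ring_nf
    nlinarith [this ▸ hi, pow_pos (two_pos (α := ℝ)) i]

theorem exists_coset_subset_of_density (h2 : ∀ y : G, y + y = 0) (Λ : Finset G) {s : ℝ}
    (hs : 0 ≤ s) (hΛ : exp (-(2 * s)) * Fintype.card G ≤ #Λ) (k : ℕ)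
    (hk : 1 ≤ 2 * Fintype.card G * s * exp (-(3 * 2 ^ k * s))) :
    ∃ (b : G) (Γ : AddSubgroup G), Nat.card Γ = 2 ^ (k + 1) ∧ ∀ γ ∈ Γ, b + γ ∈ Λ := by
  have hn : (0 : ℝ) < Fintype.card G := by simp [Fintype.card_pos]
  obtain ⟨Γ, A, hΓ, hA, hAdens⟩ := exists_add_mem_iterate_of_density h2 Λ hs hΛ k hk
  have hlt : Nat.card Γ < #A := by
    have := (two_pow_div_lt_densityBound hn hs k hk).trans_le hAdens
    rw [div_lt_div_iff_of_pos_right hn] at this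
    rw [hΓ]; exact_mod_cast this
  obtain ⟨Γ', A', hΓ', hA', hcount⟩ := exists_sup_zmultiples_add_mem h2 hA hlt
  obtain ⟨b, hb⟩ : A'.Nonempty := by
    rw [← card_pos]
    by_contra! h0
    rw [Nat.le_zero.1 h0] at hcount
    nlinarith
  exact ⟨b, Γ', by rw [hΓ', hΓ, pow_succ'], hA' b hb⟩

end

theorem stmt13_general (N : ℕ) (c : ℝ) (hc0 : 0 < c)
    (hc : (2 : ℝ) ^ (-(N : ℝ) / 2) ≤ Real.log (1 / c))
    (Λ : Finset (Fin N → ZMod 2)) (hΛ : c * 2 ^ N ≤ Λ.card) :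
    ∃ (b : Fin N → ZMod 2) (Γ : AddSubgroup (Fin N → ZMod 2)),
      (N : ℝ) * Real.log 2 / (3 * Real.log (1 / c)) ≤ Nat.card Γ ∧
      ∀ γ ∈ Γ, b + γ ∈ Λ := by
  set L := log (1 / c)
  have hL : 0 < L := (rpow_pos_of_pos two_pos _).trans_le hc
  rcases lt_or_ge (N * log 2 / (3 * L)) 1 with hT | hT
  · obtain ⟨b, hb⟩ : Λ.Nonempty :=
      card_pos.1 (by exact_mod_cast (by positivity : 0 < c * 2 ^ N).trans_le hΛ)
    exact ⟨b, ⊥, by simpa using hT.le, fun γ hγ => by simpa [AddSubgroup.mem_bot.1 hγ]⟩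
  obtain ⟨k, hkT, hTk⟩ := exists_nat_pow_near hT one_lt_two
  have hcard : (Fintype.card (Fin N → ZMod 2) : ℝ) = exp (N * log 2) := by
    simp [← rpow_natCast, rpow_def_of_pos two_pos, mul_comm]
  have hΛ' : exp (-(2 * (L / 2))) * Fintype.card (Fin N → ZMod 2) ≤ #Λ := by
    rw [show 2 * (L / 2) = L by ring, exp_neg, exp_log (one_div_pos.2 hc0), one_div, inv_inv]
    simpa using hΛ
  have hk : 1 ≤ 2 * Fintype.card (Fin N → ZMod 2) * (L / 2) * exp (-(3 * 2 ^ k * (L / 2))) := by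
    have hkL : 3 * 2 ^ k * L ≤ N * log 2 := by
      rw [le_div_iff₀ (by positivity)] at hkT; linarith
    rw [rpow_def_of_pos two_pos] at hc
    calc (1 : ℝ) = exp (N * log 2) * exp (-(N * log 2 / 2)) * exp (-(N * log 2 / 2)) := by
          rw [← exp_add, ← exp_add]; ring_nf; exact exp_zero.symm
      _ ≤ exp (N * log 2) * L * exp (-(3 * 2 ^ k * (L / 2))) := by
          gcongr
          · exact hc.trans_eq' (by ring_nf)
          · linarith
      _ = _ := by rw [hcard]; ring
  obtain ⟨b, Γ, hΓ, hb⟩ := exists_coset_subset_of_density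
    (fun x => funext fun i => CharTwo.add_self_eq_zero (x i)) Λ (by positivity) hΛ' k hk
  exact ⟨b, Γ, by rw [hΓ]; exact_mod_cast hTk.le, hb⟩

/-- in the group `(ZMod 2)^N`, every subset of density at least `c` contains a
translate `b + Γ` of a subgroup `Γ` of cardinality at least `N log 2 / (3 log(1/c))`,
provided `log(1/c) ≥ 2^{−N/2}`. -/
theorem stmt13 (N : ℕ) (hN : 1 ≤ N) (c : ℝ) (hc0 : 0 < c) (hc1 : c < 1)
    (hc : (2 : ℝ) ^ (-(N : ℝ) / 2) ≤ Real.log (1 / c))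
    (Λ : Finset (Fin N → ZMod 2)) (hΛ : c * 2 ^ N ≤ Λ.card) :
    ∃ (b : Fin N → ZMod 2) (Γ : AddSubgroup (Fin N → ZMod 2)),
      (N : ℝ) * Real.log 2 / (3 * Real.log (1 / c)) ≤ Nat.card Γ ∧
      ∀ γ ∈ Γ, b + γ ∈ Λ :=
  stmt13_general N c hc0 hc Λ hΛ
end
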